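/- arXiv:1704.01083 — 2 statements merged into one kernel-verified Lean document; each statement's English description precedes it below -/
import Mathlib

section
/- Let f ∈ ℂ[X₀,…,X₅] be a homogeneous polynomial of degree 3 that is irreducible, and suppose its zero set is invariant under ι, i.e. for every x ∈ ℂ⁶ with f(x) = 0 one has f(ι(x)) = 0. Then f(-X₀,X₁,…,X₅) = f(X₀,X₁,…,X₅); equivalently, f = X₀²·ℓ + g for some homogeneous ℓ of degree 1 and g of degree 3 in the variables X₁,…,X₅ only. -/
open MvPolynomial

/-!
Since f is prime and σ f vanishes on the zero set of f, the Nullstellensatz gives f ∣ σ f; both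
are cubics, so σ f = c • f. Comparing coefficients, (-1) ^ m₀ = c for every monomial X^m of f.
If c = -1 then X₀ divides f, impossible for an irreducible cubic; so every exponent m₀ is even,
hence 0 or 2, which is both σ f = f and the splitting f = X₀² ℓ + g.
-/

/-- The ℂ-algebra involution of ℂ[X₀,…,X₅] sending X₀ ↦ -X₀ and Xᵢ ↦ Xᵢ for i ≥ 1. -/
noncomputable def sigmaInv : MvPolynomial (Fin 6) ℂ →ₐ[ℂ] MvPolynomial (Fin 6) ℂ :=
  aeval (fun i : Fin 6 => if i = 0 then -X 0 else X i)

/-- The linear involution ι of ℂ⁶ sending (x₀,x₁,…,x₅) to (-x₀,x₁,…,x₅). -/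
def iotaInv (x : Fin 6 → ℂ) : Fin 6 → ℂ := fun i => if i = 0 then -x 0 else x i

namespace MvPolynomial

theorem dvd_of_forall_eval_eq_zero {σ k : Type*} [Field k] [IsAlgClosed k] [Finite σ]
    {p q : MvPolynomial σ k} (hp : Prime p) (h : ∀ x, eval x p = 0 → eval x q = 0) : p ∣ q := by
  have := (Ideal.span_singleton_prime hp.ne_zero).mpr hp
  rw [← Ideal.mem_span_singleton, ← IsPrime.vanishingIdeal_zeroLocus (K := k) (Ideal.span {p})]
  exact fun x hx => h x (hx p (Ideal.mem_span_singleton_self p))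

variable {σ R : Type*}

theorem isHomogeneous_iff_degree_eq [CommSemiring R] {φ : MvPolynomial σ R} {n : ℕ} :
    φ.IsHomogeneous n ↔ ∀ ⦃d⦄, coeff d φ ≠ 0 → d.degree = n := by
  simp [IsHomogeneous, IsWeightedHomogeneous, Finsupp.degree_eq_weight_one, Pi.one_def]

theorem X_dvd_of_forall_mem_support [CommSemiring R] {p : MvPolynomial σ R} {i : σ}
    (h : ∀ m ∈ p.support, m i ≠ 0) : X i ∣ p := by
  rw [← support_sum_monomial_coeff p]
  exact Finset.dvd_sum fun m hm => X_dvd_monomial.mpr (Or.inr (h m hm))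

theorem IsHomogeneous.eq_one_of_X_dvd [CommRing R] [IsDomain R] {f : MvPolynomial σ R} {n : ℕ}
    {i : σ} (hf : f.IsHomogeneous n) (hirr : Irreducible f) (hX : X i ∣ f) : n = 1 := by
  obtain ⟨u, rfl⟩ := hX
  have hu : IsUnit u := (hirr.isUnit_or_isUnit rfl).resolve_left X_prime.not_isUnit
  obtain ⟨r, -, rfl⟩ := isUnit_iff_eq_C_of_isReduced.mp hu
  exact hf.inj_right ((isHomogeneous_X R i).mul (isHomogeneous_C σ r)) hirr.ne_zero

theorem IsHomogeneous.exists_eq_C_mul_of_dvd [CommRing R] [IsDomain R] {p q : MvPolynomial σ R}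
    {n : ℕ} (hp : p.IsHomogeneous n) (hq : q.IsHomogeneous n) (hpq : p ∣ q) :
    ∃ c : R, q = C c * p := by
  obtain ⟨t, rfl⟩ := hpq
  by_cases hpt : p * t = 0
  · exact ⟨0, by rw [hpt, C_0, zero_mul]⟩
  obtain ⟨hp0, ht0⟩ := mul_ne_zero_iff.mp hpt
  have ht : t.totalDegree = 0 := by
    have := hq.totalDegree hpt
    rw [totalDegree_mul_of_isDomain hp0 ht0, hp.totalDegree hp0] at this
    omega
  exact ⟨coeff 0 t, by rw [mul_comm, ← totalDegree_eq_zero_iff_eq_C.mp ht]⟩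

theorem IsHomogeneous.exists_X_pow_mul_add [CommSemiring R] {f : MvPolynomial σ R} {n k : ℕ}
    (hf : f.IsHomogeneous n) (j : σ) (hsupp : ∀ m ∈ f.support, m j = 0 ∨ m j = k) :
    ∃ ℓ g : MvPolynomial σ R, ℓ.IsHomogeneous (n - k) ∧ degreeOf j ℓ = 0 ∧
      g.IsHomogeneous n ∧ degreeOf j g = 0 ∧ f = X j ^ k * ℓ + g := by
  classical
  refine ⟨f.divMonomial (Finsupp.single j k), f.modMonomial (Finsupp.single j k), ?_, ?_, ?_, ?_,
    by rw [X_pow_eq_monomial, divMonomial_add_modMonomial]⟩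
  · rw [isHomogeneous_iff_degree_eq]
    intro m hm
    rw [coeff_divMonomial] at hm
    have := isHomogeneous_iff_degree_eq.mp hf hm
    rw [map_add, Finsupp.degree_single] at this
    omega
  · rw [← Nat.le_zero, degreeOf_le_iff]
    intro m hm
    rw [mem_support_iff, coeff_divMonomial] at hm
    have := hsupp _ (mem_support_iff.mpr hm)
    simp only [Finsupp.add_apply, Finsupp.single_eq_same] at this
    omega
  · intro m hm
    by_cases hle : Finsupp.single j k ≤ m
    · exact absurd (coeff_modMonomial_of_le f hle) hm
    · rw [coeff_modMonomial_of_not_le f hle] at hm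
      exact hf hm
  · rw [← Nat.le_zero, degreeOf_le_iff]
    intro m hm
    rw [mem_support_iff] at hm
    by_cases hle : Finsupp.single j k ≤ m
    · exact absurd (coeff_modMonomial_of_le f hle) hm
    · rw [coeff_modMonomial_of_not_le f hle] at hm
      rw [Finsupp.single_le_iff] at hle
      have := hsupp m (mem_support_iff.mpr hm)
      omega

section Sign

variable [CommRing R] [DecidableEq σ]

theorem aeval_ite_neg_X_monomial (j : σ) (d : σ →₀ ℕ) (c : R) :
    aeval (fun i => if i = j then -X j else X i) (monomial d c) = monomial d ((-1) ^ d j * c) := by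
  have hg : ∀ i k, (if i = j then -X j else X i : MvPolynomial σ R) ^ k =
      C ((if i = j then -1 else 1) ^ k) * X i ^ k := by
    intro i k
    split_ifs with h
    · rw [h, neg_pow, map_pow, map_neg, map_one]
    · rw [one_pow, C_1, one_mul]
  have hsign : (d.prod fun i k => (if i = j then (-1 : R) else 1) ^ k) = (-1) ^ d j := by
    simp only [Finsupp.prod, ite_pow, one_pow]
    rw [Finset.prod_ite_eq']
    split_ifs with h
    · rfl
    · simp [Finsupp.notMem_support_iff.mp h]
  rw [aeval_monomial]
  simp only [hg]
  rw [Finsupp.prod_mul, ← map_finsuppProd, hsign, algebraMap_eq, ← mul_assoc, ← C_mul,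
    ← monomial_eq, mul_comm c]

theorem coeff_aeval_ite_neg_X (j : σ) (f : MvPolynomial σ R) (m : σ →₀ ℕ) :
    coeff m (aeval (fun i => if i = j then -X j else X i) f) = (-1) ^ m j * coeff m f := by
  induction f using MvPolynomial.induction_on' with
  | monomial d c =>
    rw [aeval_ite_neg_X_monomial, coeff_monomial, coeff_monomial]
    split_ifs with h
    · rw [h]
    · rw [mul_zero]
  | add p q hp hq => rw [map_add, coeff_add, coeff_add, hp, hq, mul_add]

end Sign

end MvPolynomial

theorem coeff_sigmaInv (f : MvPolynomial (Fin 6) ℂ) (m : Fin 6 →₀ ℕ) :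
    coeff m (sigmaInv f) = (-1) ^ m 0 * coeff m f :=
  coeff_aeval_ite_neg_X 0 f m

theorem eval_sigmaInv (x : Fin 6 → ℂ) (f : MvPolynomial (Fin 6) ℂ) :
    eval x (sigmaInv f) = eval (iotaInv x) f := by
  have : iotaInv x = fun i => eval x (if i = 0 then -X 0 else X i) := by
    funext i; by_cases h : i = 0 <;> simp [iotaInv, h]
  rw [this]
  exact eval₂Hom_bind₁ _ _ _ f

theorem isHomogeneous_sigmaInv {f : MvPolynomial (Fin 6) ℂ} {n : ℕ} (hf : f.IsHomogeneous n) :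
    (sigmaInv f).IsHomogeneous n :=
  fun d hd => hf (right_ne_zero_of_mul ((coeff_sigmaInv f d).symm.trans_ne hd))

/-- An irreducible homogeneous cubic f whose zero set is invariant under ι satisfies
σ(f) = f; equivalently, f = X₀²·ℓ + g with ℓ, g homogeneous of degrees 1 and 3 in the
variables X₁,…,X₅ only. -/
theorem invariant_zero_set_of_irreducible_cubic (f : MvPolynomial (Fin 6) ℂ)
    (hf : f.IsHomogeneous 3) (hirr : Irreducible f)
    (hinv : ∀ x : Fin 6 → ℂ, eval x f = 0 → eval (iotaInv x) f = 0) :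
    sigmaInv f = f ∧
      ∃ ℓ g : MvPolynomial (Fin 6) ℂ,
        ℓ.IsHomogeneous 1 ∧ degreeOf 0 ℓ = 0 ∧
        g.IsHomogeneous 3 ∧ degreeOf 0 g = 0 ∧
        f = X 0 ^ 2 * ℓ + g := by
  have hdvd : f ∣ sigmaInv f :=
    dvd_of_forall_eval_eq_zero hirr.prime fun x hx => (eval_sigmaInv x f).trans (hinv x hx)
  obtain ⟨c, hc⟩ := hf.exists_eq_C_mul_of_dvd (isHomogeneous_sigmaInv hf) hdvd
  have hsign : ∀ m ∈ f.support, (-1) ^ m 0 = c := fun m hm =>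
    mul_right_cancel₀ (mem_support_iff.mp hm) (by rw [← coeff_sigmaInv, hc, coeff_C_mul])
  have heven : ∀ m ∈ f.support, Even (m 0) := by
    by_contra! ⟨m, hm, hodd⟩
    have hX : X 0 ∣ f := X_dvd_of_forall_mem_support fun m' hm' hm'0 => by
      have := (hsign m' hm').trans (hsign m hm).symm
      rw [hm'0, pow_zero, (Nat.not_even_iff_odd.mp hodd).neg_one_pow] at this
      norm_num at this
    exact absurd (hf.eq_one_of_X_dvd hirr hX) (by norm_num)
  refine ⟨?_, hf.exists_X_pow_mul_add (k := 2) 0 fun m hm => ?_⟩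
  · ext m
    rw [coeff_sigmaInv]
    by_cases hm : m ∈ f.support
    · rw [(heven m hm).neg_one_pow, one_mul]
    · rw [notMem_support_iff.mp hm, mul_zero]
  · have hle : m 0 ≤ 3 :=
      isHomogeneous_iff_degree_eq.mp hf (mem_support_iff.mp hm) ▸ Finsupp.le_degree 0 m
    obtain ⟨k, hk⟩ := heven m hm
    omega
end

section
/- Let v, w ∈ ℂ⁶ be nonzero vectors such that w is not a scalar multiple of v, w is not a scalar multiple of ι(v), and (w₁,…,w₅) ≠ (0,…,0). Then there exists a homogeneous polynomial f ∈ ℂ[X₀,…,X₅] of degree 3 with σ(f) = f (equivalently, f = X₀²ℓ(X₁,…,X₅) + g(X₁,…,X₅)) such that f(v) = 0 and f(w) ≠ 0. -/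
/-!
X₀² and the products XᵢXⱼ with i, j ≥ 1 are σ-invariant quadrics. If every invariant quadric
vanishing at v also vanished at w, evaluation at w would be a multiple c of evaluation at v on
invariant quadrics; on these monomials this forces w = d • v or w = d • ι(v) with d² = c.
So some invariant quadric q has q(v) = 0 ≠ q(w), and q · Xᵢ with wᵢ ≠ 0 is the required cubic.
-/

open MvPolynomial

theorem LinearMap.exists_eq_smul_of_ker_le {K V : Type*} [Field K] [AddCommGroup V] [Module K V]
    {f g : V →ₗ[K] K} (h : LinearMap.ker f ≤ LinearMap.ker g) : ∃ c : K, g = c • f := by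
  have hg := mem_span_of_iInf_ker_le_ker (L := fun _ : Unit => f) (K := g) (iInf_const.trans_le h)
  rw [Set.range_const] at hg
  exact (Submodule.mem_span_singleton.mp hg).imp fun _ => Eq.symm

theorem sigmaInv_X_of_ne_zero {i : Fin 6} (hi : i ≠ 0) : sigmaInv (X i) = X i := by
  simp [sigmaInv, hi]

noncomputable def invariantQuadrics : Submodule ℂ (MvPolynomial (Fin 6) ℂ) :=
  homogeneousSubmodule (Fin 6) ℂ 2 ⊓ LinearMap.eqLocus sigmaInv.toLinearMap LinearMap.id

theorem X_mul_X_mem_invariantQuadrics {a b : Fin 6} (hab : a = 0 ↔ b = 0) :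
    X a * X b ∈ invariantQuadrics := by
  refine ⟨(isHomogeneous_X ℂ a).mul (isHomogeneous_X ℂ b), ?_⟩
  by_cases ha : a = 0
  · simp [sigmaInv, ha, hab.mp ha]
  · simp [sigmaInv, ha, mt hab.mpr ha]

theorem exists_eq_smul_or_eq_smul_iotaInv {v w : Fin 6 → ℂ} {c : ℂ} {i : Fin 6} (hi : i ≠ 0)
    (hwi : w i ≠ 0) (h0 : w 0 * w 0 = c * (v 0 * v 0))
    (hj : ∀ j, j ≠ 0 → w i * w j = c * (v i * v j)) :
    ∃ d : ℂ, w = d • v ∨ w = d • iotaInv v := by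
  have hvi : v i ≠ 0 := by
    rintro hvi
    exact hwi (mul_self_eq_zero.mp (by simpa [hvi] using hj i hi))
  obtain ⟨d, hdv⟩ : ∃ d, d * v i = w i := ⟨w i / v i, div_mul_cancel₀ _ hvi⟩
  have hc : c = d * d := by
    apply mul_right_cancel₀ (mul_ne_zero hvi hvi)
    linear_combination -(hj i hi) - (d * v i + w i) * hdv
  have htail : ∀ j, j ≠ 0 → w j = d * v j := by
    intro j hj0
    apply mul_left_cancel₀ hwi
    linear_combination hj j hj0 + v i * v j * hc + d * v j * hdv
  have hhead : (w 0 - d * v 0) * (w 0 + d * v 0) = 0 := by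
    linear_combination h0 + v 0 * v 0 * hc
  refine ⟨d, (mul_eq_zero.mp hhead).imp (fun h => ?_) (fun h => ?_)⟩
  · funext k
    by_cases hk : k = 0
    · subst hk
      simp only [Pi.smul_apply, smul_eq_mul]
      linear_combination h
    · simp [htail k hk]
  · funext k
    by_cases hk : k = 0
    · subst hk
      simp only [Pi.smul_apply, iotaInv, ↓reduceIte, smul_eq_mul, mul_neg]
      linear_combination h
    · simp [iotaInv, hk, htail k hk]

theorem exists_mem_invariantQuadrics_separating {v w : Fin 6 → ℂ}
    (hwv : ∀ c : ℂ, w ≠ c • v) (hwiv : ∀ c : ℂ, w ≠ c • iotaInv v) {i : Fin 6} (hi : i ≠ 0)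
    (hwi : w i ≠ 0) : ∃ q ∈ invariantQuadrics, eval v q = 0 ∧ eval w q ≠ 0 := by
  by_contra! h
  let ev (x : Fin 6 → ℂ) : invariantQuadrics →ₗ[ℂ] ℂ :=
    (aeval x).toLinearMap.domRestrict invariantQuadrics
  obtain ⟨c, hc⟩ := LinearMap.exists_eq_smul_of_ker_le (f := ev v) (g := ev w)
    fun q hq => h q q.2 (by simpa [ev] using hq)
  have hX {a b : Fin 6} (hab : a = 0 ↔ b = 0) : w a * w b = c * (v a * v b) := by
    simpa [ev] using LinearMap.congr_fun hc ⟨_, X_mul_X_mem_invariantQuadrics hab⟩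
  obtain ⟨d, hd | hd⟩ := exists_eq_smul_or_eq_smul_iotaInv hi hwi (hX Iff.rfl)
    fun j hj => hX (iff_of_false hi hj)
  exacts [hwv d hd, hwiv d hd]

theorem separating_invariant_cubic_general (v w : Fin 6 → ℂ)
    (hwv : ∀ c : ℂ, w ≠ c • v) (hwiv : ∀ c : ℂ, w ≠ c • iotaInv v)
    (hwtail : ∃ i : Fin 6, i ≠ 0 ∧ w i ≠ 0) :
    ∃ f : MvPolynomial (Fin 6) ℂ,
      f.IsHomogeneous 3 ∧ sigmaInv f = f ∧ eval v f = 0 ∧ eval w f ≠ 0 := by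
  obtain ⟨i, hi, hwi⟩ := hwtail
  obtain ⟨q, ⟨hq2, hqσ⟩, hqv, hqw⟩ := exists_mem_invariantQuadrics_separating hwv hwiv hi hwi
  refine ⟨q * X i, hq2.mul (isHomogeneous_X ℂ i), ?_, by simp [hqv], by simp [hqw, hwi]⟩
  rw [map_mul, sigmaInv_X_of_ne_zero hi]
  exact congrArg (· * X i) hqσ

/-- If v, w ∈ ℂ⁶ are nonzero, w is not a scalar multiple of v nor of ι(v), and
(w₁,…,w₅) ≠ 0, then there is a σ-invariant homogeneous cubic f with f(v) = 0 and
f(w) ≠ 0. -/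
theorem separating_invariant_cubic (v w : Fin 6 → ℂ) (hv : v ≠ 0) (hw : w ≠ 0)
    (hwv : ∀ c : ℂ, w ≠ c • v) (hwiv : ∀ c : ℂ, w ≠ c • iotaInv v)
    (hwtail : ∃ i : Fin 6, i ≠ 0 ∧ w i ≠ 0) :
    ∃ f : MvPolynomial (Fin 6) ℂ,
      f.IsHomogeneous 3 ∧ sigmaInv f = f ∧ eval v f = 0 ∧ eval w f ≠ 0 :=
  separating_invariant_cubic_general v w hwv hwiv hwtail
end
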